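/- The extended Kullback–Leibler divergence between a scalar-diagonal spectrum and a matrix spectrum is a pseudo-distance: let ψ : [-π,π] → ℝ be continuous with ψ(θ) > 0 for all θ, and let Φ : [-π,π] → ℂ^{m×m} be continuous with Φ(θ) Hermitian positive definite for all θ. Define D_KL(ψI_m ‖ Φ) = ∫_{-π}^{π} [ψ(θ)(m·log ψ(θ) − log det Φ(θ)) − m·ψ(θ) + tr Φ(θ)] dθ/(2π). Then D_KL(ψI_m ‖ Φ) ≥ 0, with equality if and only if Φ(θ) = ψ(θ)I_m for every θ ∈ [-π,π]. -/

import Mathlib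

open MeasureTheory Matrix InformationTheory
open scoped Real ComplexOrder

/-!
In terms of the eigenvalues `λᵢ > 0` of `Φ(θ)`, the integrand of `D_KL(ψ I_m ‖ Φ)` at `θ` is
`∑ᵢ λᵢ · klFun (ψ(θ) / λᵢ)`, where `klFun x = x log x + 1 - x` is nonnegative and vanishes only
at `x = 1`. So the integrand is nonnegative, and it vanishes exactly when every eigenvalue of
`Φ(θ)` equals `ψ(θ)`, i.e. when `Φ(θ) = ψ(θ) I_m`. Being continuous, it has zero integral over
`[-π, π]` only if it vanishes identically there.
-/

/-- The extended Kullback–Leibler divergence `D_KL(ψ I_m ‖ Φ)` between the scalar-diagonal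
spectrum `ψ I_m` and the matrix spectrum `Φ`. -/
noncomputable def DKL {m : ℕ} (ψ : ℝ → ℝ) (Φ : ℝ → Matrix (Fin m) (Fin m) ℂ) : ℝ :=
  (∫ θ in (-π)..π, (ψ θ * ((m : ℝ) * Real.log (ψ θ) - Real.log (Φ θ).det.re)
      - (m : ℝ) * ψ θ + (Φ θ).trace.re)) / (2 * π)

namespace Matrix.IsHermitian
variable {n 𝕜 : Type*} [Fintype n] [DecidableEq n] [RCLike 𝕜] {A : Matrix n n 𝕜}

theorem eigenvalues_eq_const_iff (hA : A.IsHermitian) {c : ℝ} :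
    (∀ i, hA.eigenvalues i = c) ↔ A = (c : 𝕜) • 1 := by
  constructor
  · intro h
    rw [hA.spectral_theorem, show RCLike.ofReal ∘ hA.eigenvalues = fun _ => (c : 𝕜) from
      funext fun i => congrArg _ (h i), ← smul_one_eq_diagonal, map_smul, map_one]
  · rintro rfl i
    have hv := hA.mulVec_eigenvectorBasis i
    rw [smul_mulVec, one_mulVec, RCLike.real_smul_eq_coe_smul (K := 𝕜)] at hv
    have hne : ⇑(hA.eigenvectorBasis i) ≠ 0 :=
      (WithLp.ofLp_eq_zero 2).ne.2 (hA.eigenvectorBasis.orthonormal.ne_zero i)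
    exact_mod_cast (smul_left_injective 𝕜 hne hv).symm

end Matrix.IsHermitian

theorem InformationTheory.mul_klFun_div {x y : ℝ} (hx : x ≠ 0) (hy : y ≠ 0) :
    y * klFun (x / y) = x * (Real.log x - Real.log y) - x + y := by
  rw [klFun_apply, Real.log_div hx hy]
  field_simp
  ring

namespace Matrix
variable {n 𝕜 : Type*} [Fintype n] [DecidableEq n] [RCLike 𝕜] {A : Matrix n n 𝕜} {ψ : ℝ}

noncomputable def scalarKLIntegrand (ψ : ℝ) (A : Matrix n n 𝕜) : ℝ :=
  ψ * (Fintype.card n * Real.log ψ - Real.log (RCLike.re A.det)) - Fintype.card n * ψ +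
    RCLike.re A.trace

theorem PosDef.scalarKLIntegrand_eq_sum_klFun (hA : A.PosDef) (hψ : ψ ≠ 0) :
    scalarKLIntegrand ψ A =
      ∑ i, hA.isHermitian.eigenvalues i * klFun (ψ / hA.isHermitian.eigenvalues i) := by
  have hev : ∀ i, hA.isHermitian.eigenvalues i ≠ 0 := fun i => (hA.eigenvalues_pos i).ne'
  have hdet : RCLike.re A.det = ∏ i, hA.isHermitian.eigenvalues i := by
    rw [hA.isHermitian.det_eq_prod_eigenvalues, ← RCLike.ofReal_prod, RCLike.ofReal_re]
  have htr : RCLike.re A.trace = ∑ i, hA.isHermitian.eigenvalues i := by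
    rw [hA.isHermitian.trace_eq_sum_eigenvalues, ← RCLike.ofReal_sum, RCLike.ofReal_re]
  simp only [scalarKLIntegrand, hdet, htr, mul_klFun_div hψ (hev _),
    Real.log_prod fun i _ => hev i, Finset.sum_add_distrib, Finset.sum_sub_distrib,
    ← Finset.mul_sum, Finset.sum_const, Finset.card_univ, nsmul_eq_mul, mul_sub]

theorem PosDef.scalarKLIntegrand_nonneg (hA : A.PosDef) (hψ : 0 < ψ) :
    0 ≤ scalarKLIntegrand ψ A := by
  rw [hA.scalarKLIntegrand_eq_sum_klFun hψ.ne']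
  exact Finset.sum_nonneg fun i _ =>
    mul_nonneg (hA.eigenvalues_pos i).le (klFun_nonneg (div_pos hψ (hA.eigenvalues_pos i)).le)

theorem PosDef.scalarKLIntegrand_eq_zero_iff (hA : A.PosDef) (hψ : 0 < ψ) :
    scalarKLIntegrand ψ A = 0 ↔ A = (ψ : 𝕜) • 1 := by
  have hev := hA.eigenvalues_pos
  rw [← hA.isHermitian.eigenvalues_eq_const_iff, hA.scalarKLIntegrand_eq_sum_klFun hψ.ne',
    Finset.sum_eq_zero_iff_of_nonneg fun i _ =>
      mul_nonneg (hev i).le (klFun_nonneg (div_pos hψ (hev i)).le)]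
  simp only [Finset.mem_univ, forall_const]
  refine forall_congr' fun i => ?_
  rw [mul_eq_zero_iff_left (hev i).ne',
    klFun_eq_zero_iff (div_pos hψ (hev i)).le, div_eq_one_iff_eq (hev i).ne', eq_comm]

theorem _root_.ContinuousOn.scalarKLIntegrand {ψ : ℝ → ℝ} {Φ : ℝ → Matrix n n 𝕜} {s : Set ℝ}
    (hψ : ContinuousOn ψ s) (hΦ : ContinuousOn Φ s) (hψ0 : ∀ θ ∈ s, ψ θ ≠ 0)
    (hΦpd : ∀ θ ∈ s, (Φ θ).PosDef) :
    ContinuousOn (fun θ => scalarKLIntegrand (ψ θ) (Φ θ)) s := by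
  have hdet : ∀ θ ∈ s, RCLike.re (Φ θ).det ≠ 0 := fun θ hθ =>
    (RCLike.pos_iff.1 (hΦpd θ hθ).det_pos).1.ne'
  unfold Matrix.scalarKLIntegrand
  fun_prop (disch := assumption)

end Matrix

theorem intervalIntegral.integral_eq_zero_iff_of_continuousOn_of_nonneg {f : ℝ → ℝ} {a b : ℝ}
    (hab : a < b) (hf : ContinuousOn f (Set.Icc a b)) (hf0 : ∀ x ∈ Set.Icc a b, 0 ≤ f x) :
    ∫ x in a..b, f x = 0 ↔ ∀ x ∈ Set.Icc a b, f x = 0 := by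
  refine ⟨fun h => ?_, fun h => ?_⟩
  · by_contra! hpos
    obtain ⟨c, hc, hfc⟩ := hpos
    have := intervalIntegral.integral_lt_integral_of_continuousOn_of_le_of_exists_lt hab
      continuousOn_const hf (fun x hx => hf0 x (Set.Ioc_subset_Icc_self hx))
      ⟨c, hc, (hf0 c hc).lt_of_ne' hfc⟩
    simp [h] at this
  · rw [intervalIntegral.integral_congr (g := fun _ => 0) (by rwa [Set.uIcc_of_le hab.le]),
      intervalIntegral.integral_zero]

theorem DKL_eq_integral_scalarKLIntegrand {m : ℕ} (ψ : ℝ → ℝ)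
    (Φ : ℝ → Matrix (Fin m) (Fin m) ℂ) :
    DKL ψ Φ = (∫ θ in (-π)..π, scalarKLIntegrand (ψ θ) (Φ θ)) / (2 * π) := by
  simp only [DKL, scalarKLIntegrand, Fintype.card_fin, RCLike.re_to_complex]

theorem stmt12_general (m : ℕ)
    (ψ : ℝ → ℝ)
    (hψcont : ContinuousOn ψ (Set.Icc (-π) π))
    (hψpos : ∀ θ ∈ Set.Icc (-π) π, 0 < ψ θ)
    (Φ : ℝ → Matrix (Fin m) (Fin m) ℂ)
    (hΦcont : ContinuousOn Φ (Set.Icc (-π) π))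
    (hΦpd : ∀ θ ∈ Set.Icc (-π) π, (Φ θ).PosDef) :
    0 ≤ DKL ψ Φ ∧
    (DKL ψ Φ = 0 ↔ ∀ θ ∈ Set.Icc (-π) π,
      Φ θ = ((ψ θ : ℝ) : ℂ) • (1 : Matrix (Fin m) (Fin m) ℂ)) := by
  have hπ : -π < π := by linarith [Real.pi_pos]
  have hf_nonneg : ∀ θ ∈ Set.Icc (-π) π, 0 ≤ scalarKLIntegrand (ψ θ) (Φ θ) := fun θ hθ =>
    (hΦpd θ hθ).scalarKLIntegrand_nonneg (hψpos θ hθ)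
  have hf_cont := hψcont.scalarKLIntegrand hΦcont (fun θ hθ => (hψpos θ hθ).ne') hΦpd
  rw [DKL_eq_integral_scalarKLIntegrand]
  refine ⟨div_nonneg (intervalIntegral.integral_nonneg hπ.le hf_nonneg) (by positivity), ?_⟩
  rw [div_eq_zero_iff, or_iff_left (by positivity),
    intervalIntegral.integral_eq_zero_iff_of_continuousOn_of_nonneg hπ hf_cont hf_nonneg]
  exact forall₂_congr fun θ hθ => (hΦpd θ hθ).scalarKLIntegrand_eq_zero_iff (hψpos θ hθ)

/-- The extended Kullback–Leibler divergence between a scalar-diagonal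
spectrum and a matrix spectrum is a pseudo-distance: `D_KL(ψ I_m ‖ Φ) ≥ 0`, with equality
iff `Φ(θ) = ψ(θ) I_m` for every `θ ∈ [-π,π]`. -/
theorem stmt12 (m : ℕ) (hm : 1 ≤ m)
    (ψ : ℝ → ℝ)
    (hψcont : ContinuousOn ψ (Set.Icc (-π) π))
    (hψpos : ∀ θ ∈ Set.Icc (-π) π, 0 < ψ θ)
    (Φ : ℝ → Matrix (Fin m) (Fin m) ℂ)
    (hΦcont : ContinuousOn Φ (Set.Icc (-π) π))
    (hΦpd : ∀ θ ∈ Set.Icc (-π) π, (Φ θ).PosDef) :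
    0 ≤ DKL ψ Φ ∧
    (DKL ψ Φ = 0 ↔ ∀ θ ∈ Set.Icc (-π) π,
      Φ θ = ((ψ θ : ℝ) : ℂ) • (1 : Matrix (Fin m) (Fin m) ℂ)) :=
  stmt12_general m ψ hψcont hψpos Φ hΦcont hΦpd
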